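/- arXiv:2505.05264 — 2 statements merged into one kernel-verified Lean document; each statement's English description precedes it below -/
import Mathlib

section
/- For every n ≥ 3, there exists an S_{n-1,n-1}-free subgraph of the hypercube Q_n with exactly 2^{n-3}·(4n-3) edges. Moreover, there exist two such subgraphs G_n and G_n' such that no vertex has degree n in both G_n and G_n'. -/
open SimpleGraph

/-- The `n`-dimensional hypercube: vertices are `{0,1}^n`, adjacent iff they
differ in exactly one coordinate (Hamming distance 1). -/
def cube (n : ℕ) : SimpleGraph (Fin n → Bool) where
  Adj x y := hammingDist x y = 1
  symm := ⟨fun x y (h : hammingDist x y = 1) => (hammingDist_comm y x).trans h⟩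
  loopless := ⟨fun x (h : hammingDist x x = 1) => by simp [hammingDist_self] at h⟩

/-- The double star `S_{k,l}`: an edge `uv` (here `Sum.inl none` and
`Sum.inr none`) with `k` leaves attached to `u` and `l` further leaves
attached to `v`. -/
def doubleStar (k l : ℕ) : SimpleGraph (Option (Fin k) ⊕ Option (Fin l)) :=
  SimpleGraph.fromRel (fun a b =>
    (a = Sum.inl none ∧ b = Sum.inr none) ∨
    (a = Sum.inl none ∧ ∃ i, b = Sum.inl (some i)) ∨
    (a = Sum.inr none ∧ ∃ j, b = Sum.inr (some j)))

/-- `G` contains `H` as a (not necessarily induced) subgraph. -/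
def Contains {α β : Type*} (G : SimpleGraph α) (H : SimpleGraph β) : Prop :=
  ∃ f : β ↪ α, ∀ a b, H.Adj a b → G.Adj (f a) (f b)

/-- The Turán number of `H` in the hypercube `Q_n`: the maximum number of
edges of an `H`-free subgraph of `Q_n`. -/
noncomputable def exQ (n : ℕ) {β : Type*} (H : SimpleGraph β) : ℕ :=
  sSup {m | ∃ G : SimpleGraph (Fin n → Bool),
    G ≤ cube n ∧ ¬ Contains G H ∧ G.edgeSet.ncard = m}

/-- Number of coordinates equal to `1` (Hamming weight). -/
def wt {n : ℕ} (x : Fin n → Bool) : ℕ := hammingDist x (fun _ => false)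

open Finset Function

/-!
Split `Q_{3+m}` into `2^m` copies of `Q_3`, one for each `r ∈ {0,1}^m`. In every copy delete a
perfect matching of the 6-cycle obtained by removing an antipodal pair; which pair is removed
depends on `c` and on the parity of `r`, and changes between adjacent copies. The `2^{m+1}`
unmatched vertices keep full degree `3 + m` and form an independent set of the cube, while all
other vertices lose one edge. The centre edge of `S_{n-1,n-1}` joins two vertices of degree `n`,
so no such double star survives, and counting degrees gives `2^m (4m + 9)` edges. Switching `c`
makes the two sets of full-degree vertices disjoint.
-/

namespace SimpleGraph

variable {α : Type*} {G : SimpleGraph α}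

lemma le_ncard_neighborSet_of_injective [Finite α] {ι : Type*} {u : α} {f : ι → α}
    (hf : Injective f) (hadj : ∀ i, G.Adj u (f i)) : Nat.card ι ≤ (G.neighborSet u).ncard := by
  rw [← Set.ncard_range_of_injective hf]
  exact Set.ncard_le_ncard (Set.range_subset_iff.2 hadj)

lemma sum_ncard_neighborSet [Fintype α] (G : SimpleGraph α) :
    ∑ v, (G.neighborSet v).ncard = 2 * G.edgeSet.ncard := by
  classical
  rw [← coe_edgeFinset, Set.ncard_coe_finset, ← sum_degrees_eq_twice_card_edges]
  simp only [← card_neighborSet_eq_degree, Set.ncard_eq_toFinset_card', Set.toFinset_card]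

lemma neighborSet_deleteEdges_involutive {σ : α → α} (hσ : Involutive σ) (v : α) :
    (G.deleteEdges (Set.range fun u => s(u, σ u))).neighborSet v = G.neighborSet v \ {σ v} := by
  ext w
  simp only [mem_neighborSet, deleteEdges_adj, Set.mem_range, Sym2.eq_iff, Set.mem_sdiff,
    Set.mem_singleton_iff]
  constructor
  · rintro ⟨h, hw⟩
    exact ⟨h, fun e => hw ⟨v, Or.inl ⟨rfl, e.symm⟩⟩⟩
  · rintro ⟨h, hw⟩
    refine ⟨h, ?_⟩
    rintro ⟨u, ⟨rfl, rfl⟩ | ⟨rfl, rfl⟩⟩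
    · exact hw rfl
    · exact hw (hσ u).symm

lemma ncard_neighborSet_deleteEdges_involutive_add [Finite α] [DecidableEq α] {σ : α → α}
    (hσ : Involutive σ) {v : α} (hadj : σ v ≠ v → G.Adj v (σ v)) :
    ((G.deleteEdges (Set.range fun u => s(u, σ u))).neighborSet v).ncard +
      (if σ v = v then 0 else 1) = (G.neighborSet v).ncard := by
  rw [neighborSet_deleteEdges_involutive hσ]
  split_ifs with h
  · rw [h, Set.sdiff_singleton_eq_self G.notMem_neighborSet_self, add_zero]
  · exact Set.ncard_sdiff_singleton_add_one (hadj h)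

lemma _root_.Contains.exists_adj_ncard_neighborSet [Finite α] {k l : ℕ}
    (h : Contains G (doubleStar k l)) :
    ∃ u v, G.Adj u v ∧ k + 1 ≤ (G.neighborSet u).ncard ∧
      l + 1 ≤ (G.neighborSet v).ncard := by
  obtain ⟨f, hf⟩ := h
  have adj : ∀ a b, (doubleStar k l).Adj a b → G.Adj (f a) (f b) := hf
  simp only [doubleStar, fromRel_adj] at adj
  refine ⟨f (Sum.inl none), f (Sum.inr none), adj _ _ (by simp), ?_, ?_⟩
  · have := le_ncard_neighborSet_of_injective (G := G) (u := f (Sum.inl none))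
      (f := fun o : Option (Fin k) => f (o.elim (Sum.inr none) (Sum.inl ∘ some)))
      (f.injective.comp (by rintro (_ | i) (_ | j) <;> simp))
      (by rintro (_ | i) <;> exact adj _ _ (by simp))
    simpa using this
  · have := le_ncard_neighborSet_of_injective (G := G) (u := f (Sum.inr none))
      (f := fun o : Option (Fin l) => f (o.elim (Sum.inl none) (Sum.inr ∘ some)))
      (f.injective.comp (by rintro (_ | i) (_ | j) <;> simp))
      (by rintro (_ | i) <;> exact adj _ _ (by simp))
    simpa using this

end SimpleGraph

section Cube

variable {n k m : ℕ}

lemma cube_adj_iff {v w : Fin n → Bool} : (cube n).Adj v w ↔ ∃ i, w = update v i (!v i) := by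
  change hammingDist v w = 1 ↔ _
  constructor
  · intro h
    obtain ⟨i, hi⟩ := card_eq_one.1 h
    have hdiff : ∀ j, v j ≠ w j ↔ j = i := fun j => by
      simpa using congrArg (j ∈ ·) hi
    refine ⟨i, funext fun j => ?_⟩
    by_cases hj : j = i
    · subst hj
      rw [update_self]
      exact Bool.eq_not_iff.2 (Ne.symm ((hdiff j).2 rfl))
    · rw [update_of_ne hj]
      exact (not_not.1 (mt (hdiff j).1 hj)).symm
  · rintro ⟨i, rfl⟩
    refine card_eq_one.2 ⟨i, ?_⟩
    ext j
    by_cases hj : j = i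
    · subst hj; simp
    · simp [hj]

lemma ncard_neighborSet_cube (v : Fin n → Bool) : ((cube n).neighborSet v).ncard = n := by
  have hinj : Injective fun i => update v i (!v i) := fun i j hij => by
    by_contra hne
    simpa [update_of_ne hne] using congrFun hij i
  have hrange : (cube n).neighborSet v = Set.range fun i => update v i (!v i) := by
    ext w
    simp [cube_adj_iff, eq_comm]
  rw [hrange, Set.ncard_range_of_injective hinj, Nat.card_eq_fintype_card, Fintype.card_fin]

lemma Fin.hammingDist_append {β : Type*} [DecidableEq β] (t t' : Fin k → β)
    (r r' : Fin m → β) :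
    hammingDist (Fin.append t r) (Fin.append t' r') = hammingDist t t' + hammingDist r r' := by
  simp only [hammingDist, card_filter, Fin.sum_univ_add, Fin.append_left, Fin.append_right]

lemma wt_add_wt (r r' : Fin m → Bool) :
    wt r + wt r' = hammingDist r r' + 2 * #{i | r i = true ∧ r' i = true} := by
  simp only [wt, hammingDist, card_filter, mul_sum, ← sum_add_distrib]
  refine sum_congr rfl fun i _ => ?_
  cases r i <;> cases r' i <;> rfl

lemma bodd_wt_ne_of_adj {r r' : Fin m → Bool} (h : (cube m).Adj r r') :
    (wt r).bodd ≠ (wt r').bodd := by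
  have := congrArg Nat.bodd (wt_add_wt r r')
  rw [show hammingDist r r' = 1 from h] at this
  simpa [Nat.bodd_add, Nat.bodd_mul] using this

lemma Fin.exists_eq_append {β : Type*} (v : Fin (k + m) → β) : ∃ t r, v = Fin.append t r :=
  ⟨_, _, Fin.append_castAdd_natAdd.symm⟩

lemma Fin.append_inj {β : Type*} {t t' : Fin k → β} {r r' : Fin m → β} :
    Fin.append t r = Fin.append t' r' ↔ t = t' ∧ r = r' := by
  simpa [Fin.appendEquiv] using
    (Fin.appendEquiv k m).injective.eq_iff (a := (t, r)) (b := (t', r'))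

end Cube

/-- With `s = t + b·e₀`, the vertex `t` of `Q_3` is matched to its neighbour in the unique
direction `i` with `s (i + 1) = 1` and `s (i + 2) = 0`. This is a perfect matching of `Q_3` minus
the antipodal pair where `s` is constant: `{000, 111}` for `b = false`, `{100, 011}` for
`b = true`. -/
def fibrePartner (b : Bool) (t : Fin 3 → Bool) : Fin 3 → Bool :=
  let s : Fin 3 → Bool := fun j => xor (t j) (b && j == 0)
  fun i => xor (t i) (s (i + 1) && !s (i + 2))

lemma fibrePartner_involutive (b : Bool) : Involutive (fibrePartner b) := by
  unfold Involutive; revert b; decide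

lemma fibrePartner_eq_or_hammingDist_eq_one (b : Bool) (t : Fin 3 → Bool) :
    fibrePartner b t = t ∨ hammingDist t (fibrePartner b t) = 1 := by
  revert b t; decide

lemma fibrePartner_ne_self_of_hammingDist_eq_one {b : Bool} {t t' : Fin 3 → Bool}
    (h : hammingDist t t' = 1) (ht : fibrePartner b t = t) : fibrePartner b t' ≠ t' := by
  revert b t t'; decide

lemma fibrePartner_not_ne_self {b : Bool} {t : Fin 3 → Bool} (ht : fibrePartner b t = t) :
    fibrePartner (!b) t ≠ t := by
  revert b t; decide

lemma card_fixed_fibrePartner (b : Bool) : #{t | fibrePartner b t = t} = 2 := by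
  revert b; decide

section Construction

variable {m : ℕ}

def cubePartner (c : Bool) (v : Fin (3 + m) → Bool) : Fin (3 + m) → Bool :=
  let r : Fin m → Bool := fun j => v (Fin.natAdd 3 j)
  Fin.append (fibrePartner (xor c (wt r).bodd) fun i => v (Fin.castAdd m i)) r

@[simp]
lemma cubePartner_append (c : Bool) (t : Fin 3 → Bool) (r : Fin m → Bool) :
    cubePartner c (Fin.append t r) = Fin.append (fibrePartner (xor c (wt r).bodd) t) r := by
  simp [cubePartner]

lemma cubePartner_involutive (c : Bool) : Involutive (cubePartner (m := m) c) := by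
  intro v
  obtain ⟨t, r, rfl⟩ := Fin.exists_eq_append v
  simp [fibrePartner_involutive _ t]

lemma cubePartner_eq_or_adj (c : Bool) (v : Fin (3 + m) → Bool) :
    cubePartner c v = v ∨ (cube (3 + m)).Adj v (cubePartner c v) := by
  obtain ⟨t, r, rfl⟩ := Fin.exists_eq_append v
  rw [cubePartner_append]
  rcases fibrePartner_eq_or_hammingDist_eq_one (xor c (wt r).bodd) t with h | h
  · exact Or.inl (by rw [h])
  · right
    change hammingDist _ _ = 1
    rw [Fin.hammingDist_append, h, hammingDist_self, add_zero]

lemma cubePartner_append_eq_self {c : Bool} {t : Fin 3 → Bool} {r : Fin m → Bool} :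
    cubePartner c (Fin.append t r) = Fin.append t r ↔ fibrePartner (xor c (wt r).bodd) t = t := by
  simp [cubePartner_append, Fin.append_inj]

lemma not_adj_of_cubePartner_eq (c : Bool) {v w : Fin (3 + m) → Bool}
    (hv : cubePartner c v = v) (hw : cubePartner c w = w) : ¬ (cube (3 + m)).Adj v w := by
  obtain ⟨t, r, rfl⟩ := Fin.exists_eq_append v
  obtain ⟨t', r', rfl⟩ := Fin.exists_eq_append w
  rw [cubePartner_append_eq_self] at hv hw
  intro hadj
  change hammingDist _ _ = 1 at hadj
  rw [Fin.hammingDist_append] at hadj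
  rcases Nat.add_eq_one_iff.1 hadj with ⟨ht, hr⟩ | ⟨ht, hr⟩
  · obtain rfl := hammingDist_eq_zero.1 ht
    have hb : (wt r').bodd = !(wt r).bodd :=
      Bool.eq_not_iff.2 (bodd_wt_ne_of_adj (show (cube m).Adj r r' from hr)).symm
    rw [hb, Bool.xor_not] at hw
    exact fibrePartner_not_ne_self hv hw
  · obtain rfl := hammingDist_eq_zero.1 hr
    exact fibrePartner_ne_self_of_hammingDist_eq_one ht hv hw

lemma cubePartner_true_ne_self_of_false_eq_self {v : Fin (3 + m) → Bool}
    (hv : cubePartner false v = v) :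
    cubePartner true v ≠ v := by
  obtain ⟨t, r, rfl⟩ := Fin.exists_eq_append v
  rw [Ne, cubePartner_append_eq_self]
  rw [cubePartner_append_eq_self] at hv
  simpa using fibrePartner_not_ne_self hv

lemma card_fixed_cubePartner (c : Bool) :
    #{v : Fin (3 + m) → Bool | cubePartner c v = v} = 2 ^ (m + 1) := by
  rw [card_filter, ← (Fin.appendEquiv 3 m).sum_comp, Fintype.sum_prod_type_right]
  simp only [Fin.appendEquiv, Equiv.coe_fn_mk, cubePartner_append_eq_self, ← card_filter,
    card_fixed_fibrePartner, sum_const, card_univ, Fintype.card_fun, Fintype.card_bool,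
    Fintype.card_fin, smul_eq_mul, pow_succ]

def cubeDeleteMatching (m : ℕ) (c : Bool) : SimpleGraph (Fin (3 + m) → Bool) :=
  (cube (3 + m)).deleteEdges (Set.range fun v => s(v, cubePartner c v))

lemma ncard_neighborSet_cubeDeleteMatching_add (c : Bool) (v : Fin (3 + m) → Bool) :
    ((cubeDeleteMatching m c).neighborSet v).ncard + (if cubePartner c v = v then 0 else 1) =
      3 + m := by
  rw [cubeDeleteMatching, SimpleGraph.ncard_neighborSet_deleteEdges_involutive_add
    (cubePartner_involutive c) (cubePartner_eq_or_adj c v).resolve_left, ncard_neighborSet_cube]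

lemma cubePartner_eq_self_of_le_ncard {c : Bool} {v : Fin (3 + m) → Bool}
    (h : 3 + m ≤ ((cubeDeleteMatching m c).neighborSet v).ncard) : cubePartner c v = v := by
  by_contra hv
  have := ncard_neighborSet_cubeDeleteMatching_add c v
  rw [if_neg hv] at this
  omega

lemma not_contains_doubleStar_cubeDeleteMatching (c : Bool) :
    ¬ Contains (cubeDeleteMatching m c) (doubleStar (3 + m - 1) (3 + m - 1)) := by
  intro h
  obtain ⟨u, v, huv, hu, hv⟩ := h.exists_adj_ncard_neighborSet
  exact not_adj_of_cubePartner_eq c (cubePartner_eq_self_of_le_ncard (by omega))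
    (cubePartner_eq_self_of_le_ncard (by omega)) (SimpleGraph.deleteEdges_le _ huv)

lemma ncard_edgeSet_cubeDeleteMatching (c : Bool) :
    (cubeDeleteMatching m c).edgeSet.ncard = 2 ^ m * (4 * m + 9) := by
  have hsum : 2 * (cubeDeleteMatching m c).edgeSet.ncard +
      #{v : Fin (3 + m) → Bool | ¬ cubePartner c v = v} = (3 + m) * 2 ^ (3 + m) := by
    rw [← SimpleGraph.sum_ncard_neighborSet, card_filter]
    simp_rw [ite_not, ← sum_add_distrib, ncard_neighborSet_cubeDeleteMatching_add, sum_const,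
      card_univ, Fintype.card_fun, Fintype.card_bool, Fintype.card_fin, smul_eq_mul, mul_comm]
  have hsplit := card_filter_add_card_filter_not (s := univ)
    fun v : Fin (3 + m) → Bool => cubePartner c v = v
  rw [card_fixed_cubePartner, card_univ, Fintype.card_fun, Fintype.card_bool,
    Fintype.card_fin] at hsplit
  rw [show 2 ^ (3 + m) = 8 * 2 ^ m by ring] at hsum hsplit
  rw [pow_succ] at hsplit
  linarith

end Construction

/-- for `n ≥ 3` there are two `S_{n-1,n-1}`-free subgraphs of `Q_n`,
each with `2^{n-3}(4n-3)` edges, such that no vertex has degree `n` in both. -/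
theorem stmt5 (n : ℕ) (hn : 3 ≤ n) :
    ∃ G G' : SimpleGraph (Fin n → Bool),
      G ≤ cube n ∧ G' ≤ cube n ∧
      ¬ Contains G (doubleStar (n - 1) (n - 1)) ∧
      ¬ Contains G' (doubleStar (n - 1) (n - 1)) ∧
      G.edgeSet.ncard = 2 ^ (n - 3) * (4 * n - 3) ∧
      G'.edgeSet.ncard = 2 ^ (n - 3) * (4 * n - 3) ∧
      ∀ v, ¬ ((G.neighborSet v).ncard = n ∧ (G'.neighborSet v).ncard = n) := by
  obtain ⟨m, rfl⟩ : ∃ m, n = 3 + m := ⟨n - 3, by omega⟩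
  have hcount : 2 ^ (3 + m - 3) * (4 * (3 + m) - 3) = 2 ^ m * (4 * m + 9) := by
    rw [Nat.add_sub_cancel_left]; congr 1; omega
  refine ⟨cubeDeleteMatching m false, cubeDeleteMatching m true, SimpleGraph.deleteEdges_le _,
    SimpleGraph.deleteEdges_le _, not_contains_doubleStar_cubeDeleteMatching false,
    not_contains_doubleStar_cubeDeleteMatching true, ?_, ?_, ?_⟩
  · rw [ncard_edgeSet_cubeDeleteMatching, hcount]
  · rw [ncard_edgeSet_cubeDeleteMatching, hcount]
  · rintro v ⟨hfalse, htrue⟩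
    exact cubePartner_true_ne_self_of_false_eq_self (cubePartner_eq_self_of_le_ncard hfalse.ge)
      (cubePartner_eq_self_of_le_ncard htrue.ge)
end

section
/- Let G be a subgraph of Q_3 with at least 10 edges and let S be a set of four vertices of G of degree 3. Then S cannot contain both the all-zeros vertex and the all-ones vertex, i.e., at most one vertex of S lies in S_0 ∪ S_3, unless G contains S_{2,2}. -/
open SimpleGraph

/-!
Every vertex of `Q_3` other than `000` and `111` is adjacent to one of them, so a third vertex `x`
of `S` is a cube-neighbour of some `c ∈ S ∩ {000, 111}`. As `c` has full degree 3 in `G`, the edge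
`cx` lies in `G`, and both its ends have degree 3. In a triangle-free graph two further neighbours
of each end of an edge are automatically four distinct vertices, which gives an `S_{2,2}`.
-/

lemma Set.exists_injective_fin_of_le_ncard {α : Type*} {s : Set α} {k : ℕ} (h : k ≤ s.ncard) :
    ∃ f : Fin k → α, Function.Injective f ∧ ∀ i, f i ∈ s := by
  obtain ⟨y, -⟩ := Fin.Embedding.exists_embedding_disjoint_range_of_add_le_ENat_card
    (α := s) (s := ∅) (n := k) (by simpa using (Nat.cast_le.mpr h).trans (s.ncard_le_encard))
  exact ⟨Subtype.val ∘ y, Subtype.val_injective.comp y.injective, fun i => (y i).2⟩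

lemma Option.elim'_injective {α β : Type*} {b : β} {f : α → β} (hf : f.Injective)
    (hb : ∀ a, f a ≠ b) : (Option.elim' b f).Injective := by
  rintro (_ | a) (_ | a') h
  exacts [rfl, absurd h.symm (hb a'), absurd h (hb a), congrArg some (hf h)]

namespace SimpleGraph

variable {V : Type*} {G : SimpleGraph V}

theorem contains_doubleStar_of_adj {k l : ℕ} (hG : G.CliqueFree 3) {u v : V} (huv : G.Adj u v)
    {f : Fin k → V} {g : Fin l → V} (hf : f.Injective) (hg : g.Injective)
    (hfu : ∀ i, G.Adj u (f i)) (hfv : ∀ i, f i ≠ v) (hgv : ∀ j, G.Adj v (g j))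
    (hgu : ∀ j, g j ≠ u) : Contains G (doubleStar k l) := by
  classical
  have hfg : ∀ i j, f i ≠ g j := fun i j h =>
    hG {u, v, f i} (is3Clique_triple_iff.mpr ⟨huv, hfu i, by rw [h]; exact hgv j⟩)
  have hinj : (Sum.elim (Option.elim' u f) (Option.elim' v g)).Injective := by
    refine (Option.elim'_injective hf fun i => (hfu i).ne').sumElim
      (Option.elim'_injective hg fun j => (hgv j).ne') ?_
    rintro (_ | i) (_ | j)
    exacts [huv.ne, (hgu j).symm, hfv i, hfg i j]
  refine ⟨⟨_, hinj⟩, ?_⟩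
  rintro a b ⟨-, (⟨rfl, rfl⟩ | ⟨rfl, i, rfl⟩ | ⟨rfl, j, rfl⟩) |
    (⟨rfl, rfl⟩ | ⟨rfl, i, rfl⟩ | ⟨rfl, j, rfl⟩)⟩
  exacts [huv, hfu i, hgv j, huv.symm, (hfu i).symm, (hgv j).symm]

theorem contains_doubleStar_of_le_ncard {k l : ℕ} (hG : G.CliqueFree 3) {u v : V}
    (huv : G.Adj u v) (hu : k + 1 ≤ (G.neighborSet u).ncard)
    (hv : l + 1 ≤ (G.neighborSet v).ncard) : Contains G (doubleStar k l) := by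
  obtain ⟨f, hf, hfN⟩ := Set.exists_injective_fin_of_le_ncard
    (le_tsub_of_add_le_right hu |>.trans (Set.pred_ncard_le_ncard_sdiff_singleton _ v))
  obtain ⟨g, hg, hgN⟩ := Set.exists_injective_fin_of_le_ncard
    (le_tsub_of_add_le_right hv |>.trans (Set.pred_ncard_le_ncard_sdiff_singleton _ u))
  exact contains_doubleStar_of_adj hG huv hf hg (fun i => (hfN i).1) (fun i => (hfN i).2)
    (fun j => (hgN j).1) (fun j => (hgN j).2)

theorem adj_of_le_of_ncard_neighborSet_le {H : SimpleGraph V} (hGH : G ≤ H) {u w : V}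
    (hfin : (H.neighborSet u).Finite)
    (hcard : (H.neighborSet u).ncard ≤ (G.neighborSet u).ncard) (huw : H.Adj u w) :
    G.Adj u w := by
  have hnbr : G.neighborSet u = H.neighborSet u :=
    Set.eq_of_subset_of_ncard_le (fun _ hw => hGH hw) hcard hfin
  exact hnbr.ge huw

end SimpleGraph

instance (n : ℕ) : DecidableRel (cube n).Adj := fun x y =>
  inferInstanceAs (Decidable (hammingDist x y = 1))

theorem cube_three_cliqueFree : (cube 3).CliqueFree 3 := by
  intro s hs
  obtain ⟨a, b, c, hab, hac, hbc, -⟩ := is3Clique_iff.mp hs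
  exact (by decide : ∀ a b c : Fin 3 → Bool,
    (cube 3).Adj a b → (cube 3).Adj a c → ¬ (cube 3).Adj b c) a b c hab hac hbc

theorem cube_three_ncard_neighborSet (u : Fin 3 → Bool) : ((cube 3).neighborSet u).ncard = 3 := by
  rw [Set.ncard_eq_toFinset_card']
  revert u
  decide

theorem cube_three_adj_false_or_adj_true {x : Fin 3 → Bool} (h0 : x ≠ fun _ => false)
    (h1 : x ≠ fun _ => true) : (cube 3).Adj (fun _ => false) x ∨ (cube 3).Adj (fun _ => true) x := by
  revert x
  decide

theorem stmt14_general (G : SimpleGraph (Fin 3 → Bool)) (hG : G ≤ cube 3)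
    (S : Finset (Fin 3 → Bool))
    (hcard : S.card = 4) (hdeg : ∀ v ∈ S, (G.neighborSet v).ncard = 3)
    (hfree : ¬ Contains G (doubleStar 2 2)) :
    ¬ ((fun _ => false) ∈ S ∧ (fun _ => true) ∈ S) := by
  rintro ⟨h0, h1⟩
  obtain ⟨x, hxS, hx⟩ := Finset.exists_mem_notMem_of_card_lt_card
    (s := {fun _ => false, fun _ => true}) (t := S) (Finset.card_le_two.trans_lt (by omega))
  have not_cube_adj : ∀ c ∈ S, ¬ (cube 3).Adj c x := fun c hc hcx =>
    hfree <| contains_doubleStar_of_le_ncard (cube_three_cliqueFree.anti hG)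
      (adj_of_le_of_ncard_neighborSet_le hG (Set.toFinite _)
        (by rw [cube_three_ncard_neighborSet, hdeg c hc]) hcx)
      (hdeg c hc).ge (hdeg x hxS).ge
  simp only [Finset.mem_insert, Finset.mem_singleton, not_or] at hx
  rcases cube_three_adj_false_or_adj_true hx.1 hx.2 with h | h
  exacts [not_cube_adj _ h0 h, not_cube_adj _ h1 h]

/-- if `G ≤ Q_3` has at least 10 edges, `S` is a set of four
vertices of degree 3 and `G` is `S_{2,2}`-free, then `S` cannot contain both the
all-zeros vertex and the all-ones vertex. -/
theorem stmt14 (G : SimpleGraph (Fin 3 → Bool)) (hG : G ≤ cube 3)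
    (he : 10 ≤ G.edgeSet.ncard) (S : Finset (Fin 3 → Bool))
    (hcard : S.card = 4) (hdeg : ∀ v ∈ S, (G.neighborSet v).ncard = 3)
    (hfree : ¬ Contains G (doubleStar 2 2)) :
    ¬ ((fun _ => false) ∈ S ∧ (fun _ => true) ∈ S) :=
  stmt14_general G hG S hcard hdeg hfree
end
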